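/- arXiv:2211.03475 — 2 statements merged into one kernel-verified Lean document; each statement's English description precedes it below -/
import Mathlib

section
/- Let P̃ be any probability distribution on X^n × Y^n supported on sequence pairs, let (X̃^n, Ỹ^n) ~ P̃, let T be uniform on {1,…,n} independent of everything else, and define the time-averaged marginal P̃_{X_T Y_T}(x,y) = (1/n)·Σ_{t=1}^n P̃_{X_t Y_t}(x,y). Then (1/n)·H(X̃^n, Ỹ^n) + (1/n)·D(P̃ ‖ P^{⊗n}) = H(X̃_T, Ỹ_T) + D(P̃_{X_T Y_T} ‖ P_{XY}), provided P̃ is absolutely continuous with respect to P^{⊗n}. -/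
open Finset

/-- Shannon entropy of a pmf on a finite type. -/
noncomputable def ent {α : Type*} [Fintype α] (p : α → ℝ) : ℝ :=
  -∑ a, p a * Real.log (p a)

/-- Kullback–Leibler divergence. -/
noncomputable def kl {α : Type*} [Fintype α] (p q : α → ℝ) : ℝ :=
  ∑ a, p a * Real.log (p a / q a)

/-- n-fold i.i.d. product pmf. -/
noncomputable def prodP {α : Type*} (n : ℕ) (p : α → ℝ) : (Fin n → α) → ℝ :=
  fun s => ∏ i, p (s i)

/-- Marginal of a pmf on sequences at coordinate `t`. -/
noncomputable def margAt {α : Type*} [Fintype α] [DecidableEq α] {n : ℕ}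
    (w : (Fin n → α) → ℝ) (t : Fin n) : α → ℝ :=
  fun a => ∑ s ∈ univ.filter (fun s : Fin n → α => s t = a), w s

/-- Time-averaged single-letter marginal `P̃_{X_T Y_T}`. -/
noncomputable def avgMarg {α : Type*} [Fintype α] [DecidableEq α] {n : ℕ}
    (w : (Fin n → α) → ℝ) : α → ℝ :=
  fun a => (1 / n : ℝ) * ∑ t : Fin n, margAt w t a

/-!
Both sides are cross entropies: when `p ≪ q`, `H(p) + D(p‖q) = -∑ p log q`. On the left,
`log P^{⊗n}(s) = ∑ₜ log P(sₜ)` on the support of `P̃`, so `-∑ P̃ log P^{⊗n}` splits into the sum over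
`t` of the cross entropies of the marginals `P̃_{X_t Y_t}` against `P`. On the right, the cross
entropy is linear in its first argument, so that of the averaged marginal is the average of these.
-/

lemma ent_add_kl_eq_neg_sum_mul_log {α : Type*} [Fintype α] {p q : α → ℝ}
    (habs : ∀ a, q a = 0 → p a = 0) :
    ent p + kl p q = -∑ a, p a * Real.log (q a) := by
  have hsplit : ∀ a, p a * Real.log (p a / q a) = p a * Real.log (p a) - p a * Real.log (q a) := by
    intro a
    by_cases hp : p a = 0
    · simp [hp]
    · rw [Real.log_div hp fun hq => hp (habs a hq)]
      ring
  rw [ent, kl, sum_congr rfl fun a _ => hsplit a, sum_sub_distrib]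
  ring

lemma log_prodP {α : Type*} {n : ℕ} {P : α → ℝ} {s : Fin n → α} (hs : prodP n P s ≠ 0) :
    Real.log (prodP n P s) = ∑ t, Real.log (P (s t)) :=
  Real.log_prod fun t _ hP => hs (prod_eq_zero (mem_univ t) hP)

section Marginals

variable {α : Type*} [Fintype α] [DecidableEq α] {n : ℕ}

lemma sum_margAt_mul (w : (Fin n → α) → ℝ) (t : Fin n) (f : α → ℝ) :
    ∑ a, margAt w t a * f a = ∑ s, w s * f (s t) := by
  rw [← sum_fiberwise univ (fun s => s t) fun s => w s * f (s t)]
  refine sum_congr rfl fun a _ => ?_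
  rw [margAt, sum_mul]
  exact sum_congr rfl fun s hs => by rw [(mem_filter.mp hs).2]

lemma sum_avgMarg_mul (w : (Fin n → α) → ℝ) (f : α → ℝ) :
    ∑ a, avgMarg w a * f a = (1 / n : ℝ) * ∑ t, ∑ a, margAt w t a * f a := by
  simp only [avgMarg, mul_assoc, sum_mul, ← mul_sum]
  rw [sum_comm]

lemma avgMarg_eq_zero_of_abs {w : (Fin n → α) → ℝ} {P : α → ℝ}
    (habs : ∀ s, prodP n P s = 0 → w s = 0) {a : α} (ha : P a = 0) :
    avgMarg w a = 0 := by
  refine mul_eq_zero_of_right _ (sum_eq_zero fun t _ => sum_eq_zero fun s hs => habs s ?_)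
  exact prod_eq_zero (mem_univ t) (by rw [(mem_filter.mp hs).2, ha])

lemma sum_mul_log_prodP {w : (Fin n → α) → ℝ} {P : α → ℝ}
    (habs : ∀ s, prodP n P s = 0 → w s = 0) :
    ∑ s, w s * Real.log (prodP n P s) = ∑ t, ∑ a, margAt w t a * Real.log (P a) := by
  have hpoint : ∀ s, w s * Real.log (prodP n P s) = ∑ t, w s * Real.log (P (s t)) := by
    intro s
    by_cases hws : w s = 0
    · simp [hws]
    · rw [log_prodP fun h => hws (habs s h), mul_sum]
  simp only [hpoint, sum_margAt_mul]
  exact sum_comm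

end Marginals

theorem stmt1_general {X Y : Type*} [Fintype X] [Fintype Y] [DecidableEq X] [DecidableEq Y]
    (n : ℕ)
    (P : X × Y → ℝ)
    (w : (Fin n → X × Y) → ℝ)
    (habs : ∀ s, prodP n P s = 0 → w s = 0) :
    (1 / n : ℝ) * ent w + (1 / n : ℝ) * kl w (prodP n P)
      = ent (avgMarg w) + kl (avgMarg w) P := by
  rw [← mul_add, ent_add_kl_eq_neg_sum_mul_log habs,
    ent_add_kl_eq_neg_sum_mul_log fun a => avgMarg_eq_zero_of_abs habs,
    sum_avgMarg_mul, sum_mul_log_prodP habs]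
  ring

/-- for any pmf `P̃ ≪ P^{⊗n}` on sequences,
`(1/n)·H(P̃) + (1/n)·D(P̃‖P^{⊗n}) = H(P̃_{X_T Y_T}) + D(P̃_{X_T Y_T}‖P_{XY})`. -/
theorem stmt1 {X Y : Type*} [Fintype X] [Fintype Y] [DecidableEq X] [DecidableEq Y]
    (n : ℕ) (hn : 0 < n)
    (P : X × Y → ℝ) (hP0 : ∀ a, 0 ≤ P a) (hP1 : ∑ a, P a = 1)
    (w : (Fin n → X × Y) → ℝ) (hw0 : ∀ s, 0 ≤ w s) (hw1 : ∑ s, w s = 1)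
    (habs : ∀ s, prodP n P s = 0 → w s = 0) :
    (1 / n : ℝ) * ent w + (1 / n : ℝ) * kl w (prodP n P)
      = ent (avgMarg w) + kl (avgMarg w) P :=
  stmt1_general n P w habs
end

section
/- Let (V, W) be a pair of random variables with joint distribution P_{VW} on a finite space, and let g : V × W → {0,1} be a function such that g(V,W) = 0 almost surely under P_{VW}. Then the mutual information satisfies I(V; W) = D(P_{VW} ‖ P_V × P_W) ≥ log(1/[(P_V × P_W)(g = 0)]), where (P_V × P_W)(g=0) is the probability that g equals 0 under the product of the marginals. -/
/-!
The identity `I(V;W) = H(V) + H(W) - H(V,W) = D(P_{VW} ‖ P_V × P_W)` is a termwise expansion of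
the logarithm, valid because `P_{VW}(v,w) > 0` forces both marginals at `v` and `w` to be positive.

For the bound, put `r = P_V × P_W` and `q = r(g = 0)`. The joint law lives on `{g = 0}`, and there
`log t ≤ t - 1` at `t = r / (p q)` gives `p log (p / r) ≥ p - r / q - p log q` termwise; summing over
`{g = 0}` the first two terms cancel (both sum to `1`), leaving `log (1 / q)`.
-/

open Finset

open Real

lemma mul_log_div_mul_eq {x y z : ℝ} (hx : 0 ≤ x) (hy : 0 < x → 0 < y) (hz : 0 < x → 0 < z) :
    x * log (x / (y * z)) = x * log x - x * log y - x * log z := by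
  rcases hx.eq_or_lt with rfl | hx
  · simp
  · rw [log_div hx.ne' (mul_pos (hy hx) (hz hx)).ne', log_mul (hy hx).ne' (hz hx).ne']
    ring

lemma sub_div_sub_mul_log_le_mul_log_div {x y c : ℝ} (hx : 0 ≤ x) (hy : 0 ≤ y)
    (hxy : 0 < x → 0 < y) (hc : 0 < c) :
    x - y / c - x * log c ≤ x * log (x / y) := by
  rcases hx.eq_or_lt with rfl | hx
  · simpa using div_nonneg hy hc.le
  · have hy_pos := hxy hx
    have hlog : x * log (y / (x * c)) ≤ x * (y / (x * c) - 1) :=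
      mul_le_mul_of_nonneg_left (log_le_sub_one_of_pos (by positivity)) hx.le
    have hmul : x * (y / (x * c) - 1) = y / c - x := by field_simp
    rw [log_div hy_pos.ne' (by positivity), log_mul hx.ne' hc.ne'] at hlog
    rw [log_div hx.ne' hy_pos.ne']
    linarith

theorem log_one_div_sum_le_kl {α : Type*} [Fintype α] {p r : α → ℝ} {s : Finset α}
    (hp0 : ∀ a, 0 ≤ p a) (hr0 : ∀ a, 0 ≤ r a) (hpr : ∀ a, 0 < p a → 0 < r a)
    (hp1 : ∑ a, p a = 1) (hps : ∑ a ∈ s, p a = 1) :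
    log (1 / ∑ a ∈ s, r a) ≤ kl p r := by
  classical
  have hvanish : ∀ a ∉ s, p a = 0 := by
    have hcompl : ∑ a ∈ sᶜ, p a = 0 := by linarith [sum_add_sum_compl s p]
    exact fun a ha => (sum_eq_zero_iff_of_nonneg fun a _ => hp0 a).1 hcompl a (mem_compl.2 ha)
  have hq : 0 < ∑ a ∈ s, r a := by
    obtain ⟨a, ha, hpa⟩ := exists_ne_zero_of_sum_ne_zero (hps ▸ one_ne_zero : ∑ a ∈ s, p a ≠ 0)
    exact sum_pos' (fun a _ => hr0 a) ⟨a, ha, hpr a ((hp0 a).lt_of_ne' hpa)⟩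
  calc log (1 / ∑ a ∈ s, r a)
      = ∑ a ∈ s, (p a - r a / ∑ b ∈ s, r b - p a * log (∑ b ∈ s, r b)) := by
        rw [sum_sub_distrib, sum_sub_distrib, ← sum_div, ← sum_mul, hps, div_self hq.ne',
          one_div, log_inv]
        ring
    _ ≤ ∑ a ∈ s, p a * log (p a / r a) :=
        sum_le_sum fun a _ => sub_div_sub_mul_log_le_mul_log_div (hp0 a) (hr0 a) (hpr a) hq
    _ = kl p r :=
        sum_subset (subset_univ s) fun a _ ha => by rw [hvanish a ha, zero_mul]

section Marginals

variable {V W : Type*}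

lemma sum_mul_comp_fst [Fintype V] [Fintype W] {p : V × W → ℝ} {pV : V → ℝ}
    (hpV : ∀ v, pV v = ∑ w, p (v, w)) (f : V → ℝ) : ∑ a, p a * f a.1 = ∑ v, pV v * f v := by
  simp only [Fintype.sum_prod_type, ← sum_mul, ← hpV]

lemma sum_mul_comp_snd [Fintype V] [Fintype W] {p : V × W → ℝ} {pW : W → ℝ}
    (hpW : ∀ w, pW w = ∑ v, p (v, w)) (f : W → ℝ) : ∑ a, p a * f a.2 = ∑ w, pW w * f w := by
  simp only [Fintype.sum_prod_type_right, ← sum_mul, ← hpW]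

lemma le_marginal_fst [Fintype W] {p : V × W → ℝ} (hp0 : ∀ a, 0 ≤ p a) {pV : V → ℝ}
    (hpV : ∀ v, pV v = ∑ w, p (v, w)) (a : V × W) : p a ≤ pV a.1 :=
  hpV a.1 ▸ single_le_sum (f := fun w => p (a.1, w)) (fun _ _ => hp0 _) (mem_univ a.2)

lemma le_marginal_snd [Fintype V] {p : V × W → ℝ} (hp0 : ∀ a, 0 ≤ p a) {pW : W → ℝ}
    (hpW : ∀ w, pW w = ∑ v, p (v, w)) (a : V × W) : p a ≤ pW a.2 :=
  hpW a.2 ▸ single_le_sum (f := fun v => p (v, a.2)) (fun _ _ => hp0 _) (mem_univ a.1)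

theorem ent_add_ent_sub_ent_eq_kl [Fintype V] [Fintype W] {p : V × W → ℝ} (hp0 : ∀ a, 0 ≤ p a)
    {pV : V → ℝ} (hpV : ∀ v, pV v = ∑ w, p (v, w))
    {pW : W → ℝ} (hpW : ∀ w, pW w = ∑ v, p (v, w)) :
    ent pV + ent pW - ent p = kl p (fun a => pV a.1 * pW a.2) := by
  have hterm (a : V × W) := mul_log_div_mul_eq (hp0 a)
    (fun h => h.trans_le (le_marginal_fst hp0 hpV a))
    (fun h => h.trans_le (le_marginal_snd hp0 hpW a))
  simp only [kl, ent, hterm, sum_sub_distrib, sum_mul_comp_fst hpV fun v => log (pV v),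
    sum_mul_comp_snd hpW fun w => log (pW w)]
  ring

end Marginals

/-- if `g(V,W) = 0` almost surely under the joint pmf `p`, then
`I(V;W) = D(p ‖ p_V × p_W) ≥ log(1/q)` where `q = (p_V × p_W)(g = 0)`. -/
theorem stmt8 {V W : Type*} [Fintype V] [Fintype W]
    (p : V × W → ℝ) (hp0 : ∀ a, 0 ≤ p a) (hp1 : ∑ a, p a = 1)
    (g : V × W → Fin 2)
    (hg : ∑ a ∈ univ.filter (fun a : V × W => g a = 0), p a = 1)
    (pV : V → ℝ) (hpV : ∀ v, pV v = ∑ w, p (v, w))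
    (pW : W → ℝ) (hpW : ∀ w, pW w = ∑ v, p (v, w))
    (q : ℝ) (hq : q = ∑ a ∈ univ.filter (fun a : V × W => g a = 0), pV a.1 * pW a.2) :
    ent pV + ent pW - ent p = kl p (fun a => pV a.1 * pW a.2)
    ∧ kl p (fun a => pV a.1 * pW a.2) ≥ Real.log (1 / q) := by
  have hpV0 (v : V) : 0 ≤ pV v := hpV v ▸ sum_nonneg fun w _ => hp0 _
  have hpW0 (w : W) : 0 ≤ pW w := hpW w ▸ sum_nonneg fun v _ => hp0 _
  have hprod_pos (a : V × W) (ha : 0 < p a) : 0 < pV a.1 * pW a.2 :=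
    mul_pos (ha.trans_le (le_marginal_fst hp0 hpV a)) (ha.trans_le (le_marginal_snd hp0 hpW a))
  refine ⟨ent_add_ent_sub_ent_eq_kl hp0 hpV hpW, ?_⟩
  rw [hq]
  exact log_one_div_sum_le_kl hp0 (fun a => mul_nonneg (hpV0 a.1) (hpW0 a.2)) hprod_pos hp1 hg
end
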